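/- The weighted-automaton fixpoint computation is monotone and terminates in the max-times semiring: defining w₀(q) = 1 if q ∈ F and 0 otherwise, and w_{i+1}(q) = max(w_i(q), max_{q'} wt(q,q') · w_i(q')), the sequence (w_i) is pointwise nondecreasing, bounded by 1, and its pointwise supremum w satisfies max_q in(q) · w(q) = sup over all runs ρ = q₀,...,q_n with q_n ∈ F of in(q₀) · ∏_{i<n} wt(q_i, q_{i+1}). -/

import Mathlib

/-! By induction on `i`, `w i q` is either `0` or the weight of an accepting run starting at `q`
(the maximum in the recursion is attained, and `wt q q' * chainWt wt l = chainWt wt (q :: l)`);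
conversely, an accepting run with `n` transitions starting at `q` weighs at most `w n q`.
So `⨆ i, w i q` is the supremum of the weights of the accepting runs from `q`, and multiplying
by `input q` and maximising over `q` gives the behaviour of the automaton. -/

open Finset

/-- Weight of a run (a finite sequence of states): the product of the
transition weights along consecutive pairs (empty product = 1). -/
def chainWt {Q : Type} (wt : Q → Q → ℝ) : List Q → ℝ
  | [] => 1
  | [_] => 1
  | a :: b :: rest => wt a b * chainWt wt (b :: rest)

theorem chainWt_cons {Q : Type} (wt : Q → Q → ℝ) (a : Q) (l : List Q) (h : l ≠ []) :
    chainWt wt (a :: l) = wt a (l.head h) * chainWt wt l := by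
  cases l with
  | nil => exact absurd rfl h
  | cons b rest => rfl

theorem chainWt_nonneg {Q : Type} {wt : Q → Q → ℝ} (hwt : ∀ a b, 0 ≤ wt a b) :
    ∀ l : List Q, 0 ≤ chainWt wt l
  | [] => zero_le_one
  | [_] => zero_le_one
  | a :: b :: rest => mul_nonneg (hwt a b) (chainWt_nonneg hwt (b :: rest))

structure IsMaxTimesIterate {Q : Type} [Fintype Q] [Nonempty Q] [DecidableEq Q]
    (wt : Q → Q → ℝ) (F : Finset Q) (w : ℕ → Q → ℝ) : Prop where
  zero : ∀ q, w 0 q = if q ∈ F then 1 else 0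
  succ : ∀ i q, w (i + 1) q = max (w i q) (univ.sup' univ_nonempty fun q' => wt q q' * w i q')

namespace IsMaxTimesIterate

variable {Q : Type} [Fintype Q] [Nonempty Q] [DecidableEq Q] {wt : Q → Q → ℝ} {F : Finset Q}
  {w : ℕ → Q → ℝ}

theorem monotone (hw : IsMaxTimesIterate wt F w) (q : Q) : Monotone fun i => w i q :=
  monotone_nat_of_le_succ fun i => (hw.succ i q).symm ▸ le_max_left _ _

theorem mem_Icc (hwt : ∀ q q', wt q q' ∈ Set.Icc (0 : ℝ) 1) (hw : IsMaxTimesIterate wt F w)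
    (i : ℕ) (q : Q) : w i q ∈ Set.Icc (0 : ℝ) 1 := by
  induction i generalizing q with
  | zero => rw [hw.zero]; split <;> simp
  | succ i ih =>
    rw [hw.succ]
    refine ⟨(ih q).1.trans (le_max_left _ _), max_le (ih q).2 (sup'_le _ _ fun q' _ => ?_)⟩
    exact mul_le_one₀ (hwt q q').2 (ih q').1 (ih q').2

theorem bddAbove_range (hwt : ∀ q q', wt q q' ∈ Set.Icc (0 : ℝ) 1)
    (hw : IsMaxTimesIterate wt F w) (q : Q) : BddAbove (Set.range fun i => w i q) :=
  ⟨1, by rintro _ ⟨i, rfl⟩; exact (hw.mem_Icc hwt i q).2⟩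

theorem chainWt_le (hwt : ∀ a b, 0 ≤ wt a b) (hw : IsMaxTimesIterate wt F w) :
    ∀ (l : List Q) (h : l ≠ []), l.getLast h ∈ F →
      chainWt wt l ≤ w (l.length - 1) (l.head h)
  | [a], _, hF => by simp_all [chainWt, hw.zero]
  | a :: b :: rest, _, hF => calc
      chainWt wt (a :: b :: rest) = wt a b * chainWt wt (b :: rest) := rfl
      _ ≤ wt a b * w rest.length b :=
        mul_le_mul_of_nonneg_left (hw.chainWt_le hwt (b :: rest) (List.cons_ne_nil _ _)
          (by simpa using hF)) (hwt a b)
      _ ≤ univ.sup' univ_nonempty fun q' => wt a q' * w rest.length q' :=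
        le_sup' (fun q' => wt a q' * w rest.length q') (mem_univ b)
      _ ≤ w (rest.length + 1) a := by rw [hw.succ]; exact le_max_right _ _

theorem eq_zero_or_eq_chainWt (hw : IsMaxTimesIterate wt F w) (i : ℕ) (q : Q) :
    w i q = 0 ∨
      ∃ (l : List Q) (h : l ≠ []), l.head h = q ∧ l.getLast h ∈ F ∧ w i q = chainWt wt l := by
  induction i generalizing q with
  | zero =>
    by_cases hq : q ∈ F
    · exact Or.inr ⟨[q], List.cons_ne_nil _ _, rfl, hq, by simp [hw.zero, hq, chainWt]⟩
    · exact Or.inl (by simp [hw.zero, hq])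
  | succ i ih =>
    obtain ⟨q', -, hq'⟩ := exists_mem_eq_sup' univ_nonempty fun q' => wt q q' * w i q'
    rw [hw.succ]
    rcases max_choice (w i q) (univ.sup' univ_nonempty fun q' => wt q q' * w i q') with h | h
    · rw [h]; exact ih q
    rw [h, hq']
    rcases ih q' with h0 | ⟨l, hl, rfl, hF, hwl⟩
    · exact Or.inl (by rw [h0, mul_zero])
    · exact Or.inr ⟨q :: l, List.cons_ne_nil _ _, rfl, by rwa [List.getLast_cons hl],
        by rw [hwl, chainWt_cons wt q l hl]⟩

end IsMaxTimesIterate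

/-- The weighted-automaton fixpoint computation in the max-times semiring:
the iterates `w i` are pointwise nondecreasing, bounded by 1, and their
pointwise supremum `w` satisfies `max_q in(q) * w(q) = sup over runs of
in(q₀) * weight of the run`. -/
theorem stmt_9 (Q : Type) [Fintype Q] [Nonempty Q] [DecidableEq Q]
    (wt : Q → Q → ℝ) (input : Q → ℝ) (F : Finset Q)
    (hin : ∀ q, input q ∈ Set.Icc (0:ℝ) 1)
    (hwt : ∀ q q', wt q q' ∈ Set.Icc (0:ℝ) 1)
    (w : ℕ → Q → ℝ)
    (hw0 : ∀ q, w 0 q = if q ∈ F then 1 else 0)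
    (hwsucc : ∀ i q, w (i + 1) q =
      max (w i q) (Finset.univ.sup' Finset.univ_nonempty fun q' => wt q q' * w i q')) :
    (∀ q, Monotone fun i => w i q) ∧
    (∀ i q, w i q ≤ 1) ∧
    (Finset.univ.sup' Finset.univ_nonempty (fun q => input q * ⨆ i, w i q) =
      sSup {x : ℝ | ∃ (l : List Q) (h : l ≠ []),
        l.getLast h ∈ F ∧ x = input (l.head h) * chainWt wt l}) := by
  have hw : IsMaxTimesIterate wt F w := ⟨hw0, hwsucc⟩
  have hwt0 : ∀ q q', 0 ≤ wt q q' := fun q q' => (hwt q q').1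
  set M := univ.sup' univ_nonempty fun q => input q * ⨆ i, w i q
  set S := {x : ℝ | ∃ (l : List Q) (h : l ≠ []),
    l.getLast h ∈ F ∧ x = input (l.head h) * chainWt wt l}
  have hS_le : ∀ x ∈ S, x ≤ M := by
    rintro _ ⟨l, h, hF, rfl⟩
    calc input (l.head h) * chainWt wt l
        ≤ input (l.head h) * ⨆ i, w i (l.head h) := mul_le_mul_of_nonneg_left
          ((hw.chainWt_le hwt0 l h hF).trans (le_ciSup (hw.bddAbove_range hwt _) _)) (hin _).1
      _ ≤ M := le_sup' (fun q => input q * ⨆ i, w i q) (mem_univ _)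
  have hS_nonneg : ∀ x ∈ S, 0 ≤ x := by
    rintro _ ⟨l, h, -, rfl⟩
    exact mul_nonneg (hin _).1 (chainWt_nonneg hwt0 l)
  refine ⟨hw.monotone, fun i q => (hw.mem_Icc hwt i q).2, le_antisymm ?_ ?_⟩
  · refine sup'_le _ _ fun q _ => ?_
    rw [Real.mul_iSup_of_nonneg (hin q).1]
    refine ciSup_le fun i => ?_
    rcases hw.eq_zero_or_eq_chainWt i q with h0 | ⟨l, h, rfl, hF, hwl⟩
    · rw [h0, mul_zero]; exact Real.sSup_nonneg hS_nonneg
    · exact le_csSup ⟨M, hS_le⟩ ⟨l, h, hF, by rw [hwl]⟩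
  · let x := Classical.arbitrary Q
    refine Real.sSup_le hS_le (le_trans ?_ (le_sup' _ (mem_univ x)))
    exact mul_nonneg (hin x).1 (Real.iSup_nonneg fun i => (hw.mem_Icc hwt i x).1)
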